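/- arXiv:2204.11640 — 2 statements merged into one kernel-verified Lean document; each statement's English description precedes it below -/
import Mathlib

section
/- Theorem 1 (convergence of the HCISTA objective values and vanishing increments). Let (xⁿ, vⁿ, uⁿ, wⁿ) be an HCISTA trajectory with arbitrary uⁿ ∈ ℝ^N at each step. Then: (i) the sequence of objective values F_{λⁿ}(xⁿ) = (1/2)‖Axⁿ − b‖₂² + λⁿ‖xⁿ‖₁ is non-increasing in n and converges to a limit F* ≥ 0; (ii) Σ_{n=0}^{∞} ‖xⁿ⁺¹ − xⁿ‖₂² ≤ (4/‖A‖₂²)·(F_{λ⁰}(x⁰) − F*) < ∞; in particular (iii) ‖xⁿ⁺¹ − xⁿ‖₂ → 0 as n → ∞. -/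
/-- The Euclidean (ℓ²) norm on `Fin n → ℝ`. -/
noncomputable def l2norm {n : ℕ} (x : Fin n → ℝ) : ℝ := Real.sqrt (∑ i, (x i) ^ 2)

/-- The ℓ¹ norm on `Fin n → ℝ`. -/
noncomputable def l1norm {n : ℕ} (x : Fin n → ℝ) : ℝ := ∑ i, |x i|

/-- The operator norm ‖A‖₂ of a matrix with respect to Euclidean norms. -/
noncomputable def opNorm {m n : ℕ} (A : Matrix (Fin m) (Fin n) ℝ) : ℝ :=
  sSup {c : ℝ | ∃ x : Fin n → ℝ, l2norm x ≤ 1 ∧ c = l2norm (A.mulVec x)}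

/-- Componentwise soft-thresholding: `S_θ(z)ᵢ = sgn(zᵢ) * max (|zᵢ| - θ) 0`. -/
noncomputable def soft {n : ℕ} (θ : ℝ) (z : Fin n → ℝ) : Fin n → ℝ :=
  fun i => Real.sign (z i) * max (|z i| - θ) 0

/-- Gradient of `f(x) = (1/2)‖Ax - b‖₂²`, namely `Aᵀ(Ax - b)`. -/
def gradf {m n : ℕ} (A : Matrix (Fin m) (Fin n) ℝ) (b : Fin m → ℝ) (x : Fin n → ℝ) :
    Fin n → ℝ :=
  A.transpose.mulVec (A.mulVec x - b)

/-- The Lasso objective `F_λ(x) = (1/2)‖Ax - b‖₂² + λ‖x‖₁`. -/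
noncomputable def Flasso {m n : ℕ} (A : Matrix (Fin m) (Fin n) ℝ) (b : Fin m → ℝ)
    (lam : ℝ) (x : Fin n → ℝ) : ℝ :=
  (1 / 2) * (l2norm (A.mulVec x - b)) ^ 2 + lam * l1norm x

/-- `s` is a subgradient of the convex function `φ` at the point `z`:
`φ(y) ≥ φ(z) + ⟨s, y - z⟩` for all `y`. -/
def IsSubgradient {n : ℕ} (φ : (Fin n → ℝ) → ℝ) (s z : Fin n → ℝ) : Prop :=
  ∀ y : Fin n → ℝ, φ z + ∑ i, s i * (y i - z i) ≤ φ y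

/-!
Everything rests on a one-step sufficient decrease
`F_λ(xⁿ⁺¹) + (‖A‖₂²/4) ‖xⁿ⁺¹ - xⁿ‖₂² ≤ F_λ(xⁿ)` at `λ = λⁿ`.
Both `vⁿ` and `wⁿ` are proximal-gradient steps, so the three-point inequality of such a step,
with `xⁿ` as comparison point, gives `F(vⁿ) ≤ F(xⁿ) - (1/t - ‖A‖²/2) ‖vⁿ - xⁿ‖²` and
`F(wⁿ) ≤ F(xⁿ) + (‖uⁿ - xⁿ‖² - ‖wⁿ - xⁿ‖²) / 2t`. The lower bound on `αⁿ` is exactly what lets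
the decrease of the safeguard step `vⁿ` pay for the term `‖uⁿ - xⁿ‖²` of the free step, and
convexity of `F` and of `‖· - xⁿ‖²` passes to the combination `xⁿ⁺¹`. Since `λⁿ` is
nonincreasing, `F_{λⁿ}(xⁿ)` is then nonincreasing and nonnegative, and telescoping the
decrease bounds the sum of the squared increments.
-/

open Matrix Set

section L2Norm

variable {n : ℕ}

lemma l2norm_nonneg (x : Fin n → ℝ) : 0 ≤ l2norm x := Real.sqrt_nonneg _

lemma l2norm_eq_norm (x : Fin n → ℝ) : l2norm x = ‖WithLp.toLp 2 x‖ := by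
  simp [l2norm, EuclideanSpace.norm_eq]

lemma l2norm_sq (x : Fin n → ℝ) : l2norm x ^ 2 = x ⬝ᵥ x := by
  rw [l2norm, Real.sq_sqrt (by positivity)]
  simp [dotProduct, sq]

lemma l2norm_sq_pos {x : Fin n → ℝ} (hx : x ≠ 0) : 0 < l2norm x ^ 2 := by
  rw [l2norm_eq_norm]
  have : WithLp.toLp 2 x ≠ 0 := by simpa using hx
  positivity

lemma l2norm_sub_sq (a c : Fin n → ℝ) :
    l2norm (a - c) ^ 2 = l2norm a ^ 2 - 2 * (a ⬝ᵥ c) + l2norm c ^ 2 := by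
  simp only [l2norm_sq, sub_dotProduct, dotProduct_sub, dotProduct_comm c a]
  ring

lemma l2norm_sub_comm (a c : Fin n → ℝ) : l2norm (a - c) = l2norm (c - a) := by
  simp only [l2norm_eq_norm, WithLp.toLp_sub, norm_sub_rev]

lemma l2norm_convexComb_sq (a c : Fin n → ℝ) (α : ℝ) :
    l2norm (α • a + (1 - α) • c) ^ 2 + α * (1 - α) * l2norm (a - c) ^ 2
      = α * l2norm a ^ 2 + (1 - α) * l2norm c ^ 2 := by
  simp only [l2norm_sq, add_dotProduct, dotProduct_add, sub_dotProduct, dotProduct_sub,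
    smul_dotProduct, dotProduct_smul, smul_eq_mul, dotProduct_comm c a]
  ring

lemma l2norm_convexComb_sub_sq_le {α : ℝ} (hα0 : 0 ≤ α) (hα1 : α ≤ 1) (v w x : Fin n → ℝ) :
    l2norm (α • v + (1 - α) • w - x) ^ 2
      ≤ α * l2norm (v - x) ^ 2 + (1 - α) * l2norm (w - x) ^ 2 := by
  have h := l2norm_convexComb_sq (v - x) (w - x) α
  rw [show α • (v - x) + (1 - α) • (w - x) = α • v + (1 - α) • w - x by module,
    sub_sub_sub_cancel_right] at h
  linarith [mul_nonneg (mul_nonneg hα0 (sub_nonneg.2 hα1)) (sq_nonneg (l2norm (v - w)))]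

end L2Norm

section OpNorm

variable {m n : ℕ} (A : Matrix (Fin m) (Fin n) ℝ)

lemma opNorm_eq_norm_toEuclideanLin :
    opNorm A = ‖LinearMap.toContinuousLinearMap (toEuclideanLin A)‖ := by
  rw [← ContinuousLinearMap.sSup_unitClosedBall_eq_norm, opNorm]
  congr 1
  ext c
  constructor
  · rintro ⟨x, hx, rfl⟩
    exact ⟨WithLp.toLp 2 x, by simpa [l2norm_eq_norm] using hx, by simp [l2norm_eq_norm]⟩
  · rintro ⟨y, hy, rfl⟩
    exact ⟨WithLp.ofLp y, by simpa [l2norm_eq_norm] using hy,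
      by simp [l2norm_eq_norm, toLpLin_apply]⟩

lemma l2norm_mulVec_le (x : Fin n → ℝ) : l2norm (A *ᵥ x) ≤ opNorm A * l2norm x := by
  simpa [opNorm_eq_norm_toEuclideanLin, l2norm_eq_norm] using
    (LinearMap.toContinuousLinearMap (toEuclideanLin A)).le_opNorm (WithLp.toLp 2 x)

variable {A} in
lemma opNorm_pos (hA : A ≠ 0) : 0 < opNorm A := by
  rw [opNorm_eq_norm_toEuclideanLin, norm_pos_iff]
  simpa using hA

end OpNorm

section Subgradient

variable {n : ℕ}

lemma isSubgradient_iff {φ : (Fin n → ℝ) → ℝ} {s z : Fin n → ℝ} :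
    IsSubgradient φ s z ↔ ∀ y, φ z + s ⬝ᵥ (y - z) ≤ φ y :=
  Iff.rfl

lemma convexOn_of_isSubgradient {f : (Fin n → ℝ) → ℝ} {G : (Fin n → ℝ) → Fin n → ℝ}
    (hf : ∀ z, IsSubgradient f (G z) z) : ConvexOn ℝ univ f := by
  refine ⟨convex_univ, fun v _ w _ a b ha hb hab => ?_⟩
  set z := a • v + b • w
  have hv := isSubgradient_iff.1 (hf z) v
  have hw := isSubgradient_iff.1 (hf z) w
  have hzero : a * (G z ⬝ᵥ (v - z)) + b * (G z ⬝ᵥ (w - z)) = 0 := by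
    obtain rfl : b = 1 - a := by linarith
    rw [← smul_eq_mul, ← smul_eq_mul, ← dotProduct_smul, ← dotProduct_smul, ← dotProduct_add]
    convert dotProduct_zero (G z) using 2
    module
  have hfz : f z = a * f z + b * f z := by rw [← add_mul, hab, one_mul]
  simp only [smul_eq_mul]
  linarith [mul_le_mul_of_nonneg_left hv ha, mul_le_mul_of_nonneg_left hw hb]

lemma soft_coord_le {θ : ℝ} (hθ : 0 ≤ θ) (z y : ℝ) :
    θ * |Real.sign z * max (|z| - θ) 0|
      + (z - Real.sign z * max (|z| - θ) 0) * (y - Real.sign z * max (|z| - θ) 0) ≤ θ * |y| := by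
  rcases le_or_gt |z| θ with hz | hz
  · rw [max_eq_right (sub_nonpos.2 hz)]
    simp only [mul_zero, abs_zero, sub_zero, zero_add]
    calc z * y ≤ |z| * |y| := by rw [← abs_mul]; exact le_abs_self _
      _ ≤ θ * |y| := by gcongr
  · rw [max_eq_left (by linarith)]
    rcases lt_abs.1 hz with hz | hz
    · rw [Real.sign_of_pos (by linarith), abs_of_pos (by linarith : 0 < z),
        abs_of_pos (by linarith : 0 < 1 * (z - θ))]
      nlinarith [le_abs_self y]
    · rw [Real.sign_of_neg (by linarith), abs_of_neg (by linarith : z < 0),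
        abs_of_neg (by linarith : -1 * (-z - θ) < 0)]
      nlinarith [neg_abs_le y]

lemma isSubgradient_soft {θ : ℝ} (hθ : 0 ≤ θ) (z : Fin n → ℝ) :
    IsSubgradient (fun y => θ * l1norm y) (z - soft θ z) (soft θ z) := by
  intro y
  simp only [l1norm, soft, Finset.mul_sum, Pi.sub_apply, ← Finset.sum_add_distrib]
  exact Finset.sum_le_sum fun i _ => soft_coord_le hθ (z i) (y i)

lemma convexOn_l1norm : ConvexOn ℝ univ (l1norm : (Fin n → ℝ) → ℝ) := by
  refine ⟨convex_univ, fun v _ w _ a b ha hb _ => ?_⟩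
  simp only [l1norm, smul_eq_mul, Finset.mul_sum, ← Finset.sum_add_distrib, Pi.add_apply,
    Pi.smul_apply]
  gcongr with i
  calc |a * v i + b * w i| ≤ |a * v i| + |b * w i| := abs_add_le _ _
    _ = a * |v i| + b * |w i| := by rw [abs_mul, abs_mul, abs_of_nonneg ha, abs_of_nonneg hb]

end Subgradient

lemma nonneg_and_one_sub_mul_le_of_div_le {a b α : ℝ} (ha : 0 ≤ a) (hb : 0 < b)
    (h : a / (a + b) ≤ α) : 0 ≤ α ∧ (1 - α) * a ≤ α * b := by
  have hab : 0 < a + b := by positivity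
  refine ⟨(div_nonneg ha hab.le).trans h, ?_⟩
  rw [div_le_iff₀ hab] at h
  linarith

section ProximalGradient

variable {n : ℕ} {f g : (Fin n → ℝ) → ℝ} {G : (Fin n → ℝ) → Fin n → ℝ} {L t : ℝ}

theorem proxGrad_descent (hf_sub : ∀ z, IsSubgradient f (G z) z)
    (hf_smooth : ∀ z y, f y ≤ f z + G z ⬝ᵥ (y - z) + L / 2 * l2norm (y - z) ^ 2) (ht : 0 ≤ t)
    {u p : Fin n → ℝ} (hp : IsSubgradient (fun y => t * g y) (u - t • G u - p) p)
    (y : Fin n → ℝ) :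
    2 * t * (f p + g p) + l2norm (p - y) ^ 2 + (1 - t * L) * l2norm (p - u) ^ 2
      ≤ 2 * t * (f y + g y) + l2norm (u - y) ^ 2 := by
  have hsmooth := mul_le_mul_of_nonneg_left (hf_smooth u p) ht
  have hconvex := mul_le_mul_of_nonneg_left (isSubgradient_iff.1 (hf_sub u) y) ht
  have hprox := isSubgradient_iff.1 hp y
  have hdot : (u - t • G u - p) ⬝ᵥ (y - p)
      = (u - p) ⬝ᵥ (y - p) - t * (G u ⬝ᵥ (y - u)) + t * (G u ⬝ᵥ (p - u)) := by
    simp only [sub_dotProduct, dotProduct_sub, smul_dotProduct, smul_eq_mul]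
    ring
  have hcos : l2norm (u - y) ^ 2
      = l2norm (p - u) ^ 2 - 2 * ((u - p) ⬝ᵥ (y - p)) + l2norm (p - y) ^ 2 := by
    rw [show u - y = (u - p) - (y - p) by abel, l2norm_sub_sq, l2norm_sub_comm p u,
      l2norm_sub_comm p y]
  linarith

theorem hcista_step_descent (hf_sub : ∀ z, IsSubgradient f (G z) z)
    (hf_smooth : ∀ z y, f y ≤ f z + G z ⬝ᵥ (y - z) + L / 2 * l2norm (y - z) ^ 2)
    (hg : ConvexOn ℝ univ g) (hL : 0 ≤ L) (ht : 0 < t) (htL : t * L ≤ 1)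
    {δ α : ℝ} (hδ : 1 / 4 < δ ∧ δ < 1 / 2) {x u v w x' : Fin n → ℝ}
    (hv : IsSubgradient (fun y => t * g y) (x - t • G x - v) v)
    (hw : IsSubgradient (fun y => t * g y) (u - t • G u - w) w)
    (hx' : x' = α • v + (1 - α) • w) (hα1 : v = x → α = 1)
    (hα2 : v ≠ x → l2norm (u - x) ^ 2 /
        (l2norm (u - x) ^ 2 + (1 - 2 * t * δ * L) * l2norm (v - x) ^ 2) ≤ α ∧ α < 1) :
    f x' + g x' + L / 4 * l2norm (x' - x) ^ 2 ≤ f x + g x := by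
  by_cases hvx : v = x
  · subst hvx
    simp [hx', hα1 rfl, l2norm]
  obtain ⟨hlo, hα_lt⟩ := hα2 hvx
  have hSv : 0 < l2norm (v - x) ^ 2 := l2norm_sq_pos (sub_ne_zero.2 hvx)
  have hc : 0 < 1 - 2 * t * δ * L := by nlinarith
  obtain ⟨hα0, hαu⟩ := nonneg_and_one_sub_mul_le_of_div_le (sq_nonneg _) (mul_pos hc hSv) hlo
  have h1α : 0 ≤ 1 - α := sub_nonneg.2 hα_lt.le
  have hFv := proxGrad_descent hf_sub hf_smooth ht.le hv x
  have hFw := proxGrad_descent hf_sub hf_smooth ht.le hw x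
  simp only [sub_self, show l2norm (0 : Fin n → ℝ) = 0 by simp [l2norm]] at hFv
  have hF : f x' + g x' ≤ α * (f v + g v) + (1 - α) * (f w + g w) := by
    simpa [hx'] using ((convexOn_of_isSubgradient hf_sub).add hg).2 (mem_univ v) (mem_univ w)
      hα0 h1α (add_sub_cancel α 1)
  have hsq := l2norm_convexComb_sub_sq_le hα0 hα_lt.le v w x
  rw [← hx'] at hsq
  have htL0 : 0 ≤ t * L := mul_nonneg ht.le hL
  suffices 2 * t * (f x' + g x' + L / 4 * l2norm (x' - x) ^ 2) ≤ 2 * t * (f x + g x) from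
    le_of_mul_le_mul_left this (by positivity)
  linarith [mul_le_mul_of_nonneg_left hFv hα0, mul_le_mul_of_nonneg_left hFw h1α,
    mul_le_mul_of_nonneg_left hF (by positivity : (0 : ℝ) ≤ 2 * t),
    mul_le_mul_of_nonneg_left hsq (by positivity : (0 : ℝ) ≤ t * L / 2),
    mul_nonneg (mul_nonneg hα0 hSv.le) (mul_nonneg htL0 (by linarith : (0 : ℝ) ≤ δ - 1 / 4)),
    mul_nonneg (mul_nonneg hα0 hSv.le) (sub_nonneg.2 htL),
    mul_nonneg (mul_nonneg h1α (sq_nonneg (l2norm (w - x))))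
      (by linarith : (0 : ℝ) ≤ 1 - t * L / 2),
    mul_nonneg (mul_nonneg h1α (sq_nonneg (l2norm (w - u)))) (sub_nonneg.2 htL)]

end ProximalGradient

section LeastSquares

variable {m n : ℕ} (A : Matrix (Fin m) (Fin n) ℝ) (b : Fin m → ℝ)

noncomputable def leastSquares (x : Fin n → ℝ) : ℝ := 1 / 2 * l2norm (A *ᵥ x - b) ^ 2

lemma leastSquares_eq_add (z y : Fin n → ℝ) :
    leastSquares A b y
      = leastSquares A b z + gradf A b z ⬝ᵥ (y - z) + 1 / 2 * l2norm (A *ᵥ (y - z)) ^ 2 := by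
  have hy : A *ᵥ y - b = (A *ᵥ z - b) + A *ᵥ (y - z) := by rw [mulVec_sub]; abel
  have hgrad : gradf A b z ⬝ᵥ (y - z) = (A *ᵥ z - b) ⬝ᵥ A *ᵥ (y - z) := by
    rw [gradf, mulVec_transpose, dotProduct_mulVec]
  simp only [leastSquares, hy, hgrad, l2norm_sq, add_dotProduct, dotProduct_add,
    dotProduct_comm (A *ᵥ (y - z))]
  ring

lemma isSubgradient_gradf (z : Fin n → ℝ) : IsSubgradient (leastSquares A b) (gradf A b z) z :=
  isSubgradient_iff.2 fun y => by
    rw [leastSquares_eq_add A b z y]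
    nlinarith [sq_nonneg (l2norm (A *ᵥ (y - z)))]

lemma leastSquares_le (z y : Fin n → ℝ) :
    leastSquares A b y
      ≤ leastSquares A b z + gradf A b z ⬝ᵥ (y - z) + opNorm A ^ 2 / 2 * l2norm (y - z) ^ 2 := by
  have h := pow_le_pow_left₀ (l2norm_nonneg _) (l2norm_mulVec_le A (y - z)) 2
  rw [leastSquares_eq_add A b z y, mul_pow] at *
  linarith

end LeastSquares

section Lasso

variable {m n : ℕ} (A : Matrix (Fin m) (Fin n) ℝ) (b : Fin m → ℝ)

lemma l1norm_nonneg (x : Fin n → ℝ) : 0 ≤ l1norm x :=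
  Finset.sum_nonneg fun i _ => abs_nonneg (x i)

lemma Flasso_nonneg {lam : ℝ} (hlam : 0 ≤ lam) (x : Fin n → ℝ) : 0 ≤ Flasso A b lam x := by
  have := l1norm_nonneg x
  unfold Flasso
  positivity

lemma Flasso_le_Flasso_of_le {lam lam' : ℝ} (h : lam' ≤ lam) (x : Fin n → ℝ) :
    Flasso A b lam' x ≤ Flasso A b lam x := by
  unfold Flasso
  gcongr
  exact l1norm_nonneg x

variable {A b} in
theorem Flasso_hcista_step (hA : A ≠ 0) {x u v w x' : Fin n → ℝ} {δ t lam α : ℝ}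
    (hδ : 1 / 4 < δ ∧ δ < 1 / 2)
    (ht : 1 / (4 * δ * opNorm A ^ 2) ≤ t ∧ t ≤ 1 / opNorm A ^ 2) (hlam : 0 < lam)
    (hv : v = soft (lam * t) (x - t • gradf A b x))
    (hw : w = soft (lam * t) (u - t • gradf A b u))
    (hx' : x' = α • v + (1 - α) • w) (hα1 : v = x → α = 1)
    (hα2 : v ≠ x → l2norm (u - x) ^ 2 /
        (l2norm (u - x) ^ 2 + (1 - 2 * t * δ * opNorm A ^ 2) * l2norm (v - x) ^ 2) ≤ α ∧ α < 1) :
    Flasso A b lam x' + opNorm A ^ 2 / 4 * l2norm (x' - x) ^ 2 ≤ Flasso A b lam x := by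
  have hL : 0 < opNorm A ^ 2 := pow_pos (opNorm_pos hA) 2
  have ht0 : 0 < t := lt_of_lt_of_le (by have := hδ.1; positivity) ht.1
  have hprox : ∀ {z p : Fin n → ℝ}, p = soft (lam * t) (z - t • gradf A b z) →
      IsSubgradient (fun y => t * (lam * l1norm y)) (z - t • gradf A b z - p) p := by
    rintro z p rfl
    simpa only [mul_left_comm t lam, mul_assoc] using
      isSubgradient_soft (mul_nonneg hlam.le ht0.le) (z - t • gradf A b z)
  -- `Flasso A b lam` unfolds to `leastSquares A b + lam • l1norm`.
  exact hcista_step_descent (isSubgradient_gradf A b) (leastSquares_le A b)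
    (convexOn_l1norm.smul hlam.le) hL.le ht0 ((le_div_iff₀ hL).1 ht.2) hδ (hprox hv) (hprox hw)
    hx' hα1 hα2

end Lasso

lemma summable_of_sufficient_decrease {F d : ℕ → ℝ} {c Fstar : ℝ} (hc : 0 < c)
    (hd : ∀ n, 0 ≤ d n) (hdesc : ∀ n, F (n + 1) + c * d n ≤ F n) (hlow : ∀ n, Fstar ≤ F n) :
    Summable d ∧ ∑' n, d n ≤ (F 0 - Fstar) / c := by
  have hpartial : ∀ K, ∑ n ∈ Finset.range K, d n ≤ (F 0 - Fstar) / c := by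
    intro K
    rw [le_div_iff₀ hc, Finset.sum_mul]
    calc ∑ n ∈ Finset.range K, d n * c ≤ ∑ n ∈ Finset.range K, (F n - F (n + 1)) :=
          Finset.sum_le_sum fun n _ => by linarith [hdesc n]
      _ = F 0 - F K := Finset.sum_range_sub' F K
      _ ≤ F 0 - Fstar := by linarith [hlow K]
  exact ⟨summable_of_sum_range_le hd hpartial, Real.tsum_le_of_sum_range_le hd hpartial⟩

theorem hcista_theorem1_general {M N : ℕ}
    (A : Matrix (Fin M) (Fin N) ℝ) (hA : A ≠ 0) (b : Fin M → ℝ)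
    (x v u w : ℕ → Fin N → ℝ) (δ t lam α : ℕ → ℝ) (Clam : ℝ)
    (hδ : ∀ n, 1 / 4 < δ n ∧ δ n < 1 / 2)
    (ht : ∀ n, 1 / (4 * δ n * (opNorm A) ^ 2) ≤ t n ∧ t n ≤ 1 / (opNorm A) ^ 2)
    (hlam : ∀ n, 0 < lam n)
    (hv : ∀ n, v n = soft (lam n * t n) (x n - t n • gradf A b (x n)))
    (hw : ∀ n, w n = soft (lam n * t n) (u n - t n • gradf A b (u n)))
    (hxs : ∀ n, x (n + 1) = α n • v n + (1 - α n) • w n)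
    (hα1 : ∀ n, v n = x n → α n = 1)
    (hα2 : ∀ n, v n ≠ x n →
      (l2norm (u n - x n)) ^ 2 /
        ((l2norm (u n - x n)) ^ 2
          + (1 - 2 * t n * δ n * (opNorm A) ^ 2) * (l2norm (v n - x n)) ^ 2) ≤ α n
        ∧ α n < 1)
    (hlam' : ∀ n, lam (n + 1) ≤ min (lam n) (Clam * l2norm (x (n + 1) - x n))) :
    ∃ Fstar : ℝ, 0 ≤ Fstar ∧
      (∀ n, Flasso A b (lam (n + 1)) (x (n + 1)) ≤ Flasso A b (lam n) (x n)) ∧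
      Filter.Tendsto (fun n => Flasso A b (lam n) (x n)) Filter.atTop (nhds Fstar) ∧
      Summable (fun n => (l2norm (x (n + 1) - x n)) ^ 2) ∧
      (∑' n : ℕ, (l2norm (x (n + 1) - x n)) ^ 2) ≤
        (4 / (opNorm A) ^ 2) * (Flasso A b (lam 0) (x 0) - Fstar) ∧
      Filter.Tendsto (fun n => l2norm (x (n + 1) - x n)) Filter.atTop (nhds 0) := by
  set F := fun n => Flasso A b (lam n) (x n)
  have hL : 0 < opNorm A ^ 2 := pow_pos (opNorm_pos hA) 2
  have hdesc : ∀ n, F (n + 1) + opNorm A ^ 2 / 4 * l2norm (x (n + 1) - x n) ^ 2 ≤ F n :=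
    fun n => (add_le_add_left (Flasso_le_Flasso_of_le A b
      ((hlam' n).trans (min_le_left _ _)) _) _).trans
      (Flasso_hcista_step hA (hδ n) (ht n) (hlam n) (hv n) (hw n) (hxs n) (hα1 n) (hα2 n))
  have hmono : ∀ n, F (n + 1) ≤ F n := fun n =>
    le_of_add_le_of_nonneg_left (hdesc n) (by positivity)
  have hF0 : ∀ n, 0 ≤ F n := fun n => Flasso_nonneg A b (hlam n).le (x n)
  have hbdd : BddBelow (range F) := ⟨0, forall_mem_range.2 hF0⟩
  obtain ⟨hsum, htsum⟩ := summable_of_sufficient_decrease (by positivity) (fun n => sq_nonneg _)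
    hdesc (ciInf_le hbdd)
  refine ⟨⨅ n, F n, le_ciInf hF0, hmono, tendsto_atTop_ciInf (antitone_nat_of_succ_le hmono) hbdd,
    hsum, htsum.trans_eq (by ring), ?_⟩
  simpa [Real.sqrt_sq (l2norm_nonneg _)] using hsum.tendsto_atTop_zero.sqrt

/-- Theorem 1: convergence of the HCISTA objective values and vanishing increments. -/
theorem hcista_theorem1 {M N : ℕ} (hM : 0 < M) (hN : 0 < N)
    (A : Matrix (Fin M) (Fin N) ℝ) (hA : A ≠ 0) (b : Fin M → ℝ)
    (x v u w : ℕ → Fin N → ℝ) (δ t lam α : ℕ → ℝ) (Clam : ℝ) (hClam : 0 < Clam)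
    (hδ : ∀ n, 1 / 4 < δ n ∧ δ n < 1 / 2)
    (ht : ∀ n, 1 / (4 * δ n * (opNorm A) ^ 2) ≤ t n ∧ t n ≤ 1 / (opNorm A) ^ 2)
    (hlam : ∀ n, 0 < lam n)
    (hv : ∀ n, v n = soft (lam n * t n) (x n - t n • gradf A b (x n)))
    (hw : ∀ n, w n = soft (lam n * t n) (u n - t n • gradf A b (u n)))
    (hxs : ∀ n, x (n + 1) = α n • v n + (1 - α n) • w n)
    (hα1 : ∀ n, v n = x n → α n = 1)
    (hα2 : ∀ n, v n ≠ x n →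
      (l2norm (u n - x n)) ^ 2 /
        ((l2norm (u n - x n)) ^ 2
          + (1 - 2 * t n * δ n * (opNorm A) ^ 2) * (l2norm (v n - x n)) ^ 2) ≤ α n
        ∧ α n < 1)
    (hlam' : ∀ n, lam (n + 1) ≤ min (lam n) (Clam * l2norm (x (n + 1) - x n))) :
    ∃ Fstar : ℝ, 0 ≤ Fstar ∧
      (∀ n, Flasso A b (lam (n + 1)) (x (n + 1)) ≤ Flasso A b (lam n) (x n)) ∧
      Filter.Tendsto (fun n => Flasso A b (lam n) (x n)) Filter.atTop (nhds Fstar) ∧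
      Summable (fun n => (l2norm (x (n + 1) - x n)) ^ 2) ∧
      (∑' n : ℕ, (l2norm (x (n + 1) - x n)) ^ 2) ≤
        (4 / (opNorm A) ^ 2) * (Flasso A b (lam 0) (x 0) - Fstar) ∧
      Filter.Tendsto (fun n => l2norm (x (n + 1) - x n)) Filter.atTop (nhds 0) :=
  hcista_theorem1_general A hA b x v u w δ t lam α Clam hδ ht hlam hv hw hxs hα1 hα2 hlam'
end

section
/- One-iteration ℓ¹ contraction of HLISTA-CP (Eqs. (es87)–(es88) in the proof of Theorem 4). Let S ⊆ {1, …, N} with |S| ≥ 2 and 2|S| ≤ N, μ = μ(A), x* ∈ ℝ^N with supp(x*) ⊆ S, and b = A x*. Let x ∈ ℝ^N with supp(x) ⊆ S, let u ∈ ℝ^N be arbitrary, let W̄, Ŵ ∈ W_s(A), set θ₁ = μ‖x − x*‖₁ and θ₂ = μ·(‖u − x*‖₁ + ((N − |S|)/(|S| − 1))·‖u‖₁), define v = S_{θ₁}(x + W̄ᵀ(b − Ax)) and w = S_{θ₂}(u + Ŵᵀ(b − Au)), and let α satisfy θ₂/(θ₁ + θ₂) ≤ α < 1 if θ₁ ≠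 0 and α = 1 if θ₁ = 0. Then x⁺ = αv + (1 − α)w satisfies supp(x⁺) ⊆ S and ‖x⁺ − x*‖₁ ≤ (α + 1)·μ(2|S| − 1)·‖x − x*‖₁ ≤ 2μ(2|S| − 1)·‖x − x*‖₁. -/
open scoped Classical

/-- `max_{i ≠ j} |WᵢᵀAⱼ|`, where `Wᵢ`, `Aⱼ` are columns. -/
noncomputable def mutualMax {m n : ℕ} (A W : Matrix (Fin m) (Fin n) ℝ) : ℝ :=
  sSup {c : ℝ | ∃ i j : Fin n, i ≠ j ∧ c = |∑ k, W k i * A k j|}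

/-- Generalized mutual coherence `μ(A)`: the infimum of `max_{i≠j} |WᵢᵀAⱼ|` over all
matrices `W` with `WᵢᵀAᵢ = 1` for all `i`. -/
noncomputable def gmc {m n : ℕ} (A : Matrix (Fin m) (Fin n) ℝ) : ℝ :=
  sInf {c : ℝ | ∃ W : Matrix (Fin m) (Fin n) ℝ,
    (∀ i, (∑ k, W k i * A k i) = 1) ∧ c = mutualMax A W}

/-- `W ∈ W_s(A)`: `WᵢᵀAᵢ = 1` for all `i`, and `W` attains the infimum defining `μ(A)`. -/
def memWs {m n : ℕ} (A W : Matrix (Fin m) (Fin n) ℝ) : Prop :=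
  (∀ i, (∑ k, W k i * A k i) = 1) ∧ mutualMax A W = gmc A

lemma mutualMax_bdd {m n : ℕ} (A W : Matrix (Fin m) (Fin n) ℝ) :
    BddAbove {c : ℝ | ∃ i j : Fin n, i ≠ j ∧ c = |∑ k, W k i * A k j|} := by
  apply Set.Finite.bddAbove
  apply Set.Finite.subset
    (Set.finite_range (fun p : Fin n × Fin n => |∑ k, W k p.1 * A k p.2|))
  rintro c ⟨i, j, _, rfl⟩
  exact ⟨(i, j), rfl⟩

lemma le_mutualMax {m n : ℕ} (A W : Matrix (Fin m) (Fin n) ℝ) {i j : Fin n} (hij : i ≠ j) :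
    |∑ k, W k i * A k j| ≤ mutualMax A W :=
  le_csSup (mutualMax_bdd A W) ⟨i, j, hij, rfl⟩

lemma mutualMax_nonneg {m n : ℕ} (A W : Matrix (Fin m) (Fin n) ℝ) (hn : 2 ≤ n) :
    0 ≤ mutualMax A W := by
  have h0 : (0:ℕ) < n := by omega
  have h1 : (1:ℕ) < n := by omega
  have hij : (⟨0, h0⟩ : Fin n) ≠ ⟨1, h1⟩ := by
    intro h; simpa using congrArg Fin.val h
  exact le_trans (abs_nonneg _) (le_mutualMax A W hij)

lemma soft_sub_self {θ : ℝ} (hθ : 0 ≤ θ) (z : ℝ) :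
    |Real.sign z * max (|z| - θ) 0 - z| ≤ θ := by
  rcases lt_trichotomy z 0 with hz | rfl | hz
  · rw [Real.sign_of_neg hz, abs_of_neg hz]
    rcases le_total (-z - θ) 0 with h | h
    · rw [max_eq_right h, mul_zero, abs_le]; constructor <;> nlinarith
    · rw [max_eq_left h, abs_le]; constructor <;> nlinarith
  · simpa [Real.sign_zero] using hθ
  · rw [Real.sign_of_pos hz, abs_of_pos hz, one_mul]
    rcases le_total (z - θ) 0 with h | h
    · rw [max_eq_right h, abs_le]; constructor <;> nlinarith
    · rw [max_eq_left h, abs_le]; constructor <;> nlinarith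

lemma soft_eq_zero' {θ z : ℝ} (h : |z| ≤ θ) : Real.sign z * max (|z| - θ) 0 = 0 := by
  rw [max_eq_right (by linarith), mul_zero]

lemma mulVec_decomp {M N : ℕ} (A W : Matrix (Fin M) (Fin N) ℝ)
    (hW : ∀ i, (∑ k, W k i * A k i) = 1) (d : Fin N → ℝ) (i : Fin N) :
    (W.transpose.mulVec (A.mulVec d)) i
      = d i + ∑ j ∈ Finset.univ.erase i, (∑ k, W k i * A k j) * d j := by
  have h : (W.transpose.mulVec (A.mulVec d)) i = ∑ j, (∑ k, W k i * A k j) * d j := by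
    simp only [Matrix.mulVec, dotProduct, Matrix.transpose_apply, Finset.mul_sum,
      Finset.sum_mul]
    rw [Finset.sum_comm]
    exact Finset.sum_congr rfl fun j _ => Finset.sum_congr rfl fun k _ => by ring
  rw [h, ← Finset.add_sum_erase _ _ (Finset.mem_univ i), hW i, one_mul]

lemma err_bound {M N : ℕ} (A W : Matrix (Fin M) (Fin N) ℝ) (μ : ℝ)
    (hμ : ∀ i j : Fin N, i ≠ j → |∑ k, W k i * A k j| ≤ μ)
    (d : Fin N → ℝ) (i : Fin N) :
    |∑ j ∈ Finset.univ.erase i, (∑ k, W k i * A k j) * d j|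
      ≤ μ * ((∑ j, |d j|) - |d i|) := by
  calc |∑ j ∈ Finset.univ.erase i, (∑ k, W k i * A k j) * d j|
      ≤ ∑ j ∈ Finset.univ.erase i, |(∑ k, W k i * A k j) * d j| :=
        Finset.abs_sum_le_sum_abs _ _
    _ ≤ ∑ j ∈ Finset.univ.erase i, μ * |d j| := by
        apply Finset.sum_le_sum; intro j hj
        rw [abs_mul]
        exact mul_le_mul_of_nonneg_right
          (hμ i j (Ne.symm (Finset.mem_erase.1 hj).1)) (abs_nonneg _)
    _ = μ * ∑ j ∈ Finset.univ.erase i, |d j| := (Finset.mul_sum _ _ _).symm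
    _ = μ * ((∑ j, |d j|) - |d i|) := by
        congr 1
        have := Finset.add_sum_erase Finset.univ (fun j => |d j|) (Finset.mem_univ i)
        linarith

set_option maxHeartbeats 2000000 in
/-- One-iteration ℓ¹ contraction of HLISTA-CP (Eqs. (es87)–(es88) in the proof of
Theorem 4). -/
theorem hlista_cp_contraction {M N : ℕ} (hM : 0 < M) (hN : 0 < N)
    (A : Matrix (Fin M) (Fin N) ℝ)
    (hcols : ∀ j, l2norm (fun i => A i j) = 1)
    (S : Finset (Fin N)) (hS2 : 2 ≤ S.card) (hSN : 2 * S.card ≤ N)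
    (xstar : Fin N → ℝ) (hsupp : ∀ i, xstar i ≠ 0 → i ∈ S)
    (b : Fin M → ℝ) (hb : b = A.mulVec xstar)
    (x : Fin N → ℝ) (hx : ∀ i, x i ≠ 0 → i ∈ S)
    (u : Fin N → ℝ)
    (Wbar What : Matrix (Fin M) (Fin N) ℝ) (hWbar : memWs A Wbar) (hWhat : memWs A What)
    (θ₁ θ₂ : ℝ)
    (hθ₁ : θ₁ = gmc A * l1norm (x - xstar))
    (hθ₂ : θ₂ = gmc A * (l1norm (u - xstar)
      + (((N : ℝ) - (S.card : ℝ)) / ((S.card : ℝ) - 1)) * l1norm u))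
    (v w : Fin N → ℝ)
    (hv : v = soft θ₁ (x + Wbar.transpose.mulVec (b - A.mulVec x)))
    (hw : w = soft θ₂ (u + What.transpose.mulVec (b - A.mulVec u)))
    (α : ℝ)
    (hα : (θ₁ ≠ 0 → θ₂ / (θ₁ + θ₂) ≤ α ∧ α < 1) ∧ (θ₁ = 0 → α = 1))
    (xp : Fin N → ℝ) (hxp : xp = α • v + (1 - α) • w) :
    (∀ i, xp i ≠ 0 → i ∈ S) ∧
    l1norm (xp - xstar) ≤ (α + 1) * (gmc A * (2 * (S.card : ℝ) - 1)) * l1norm (x - xstar) ∧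
    l1norm (xp - xstar) ≤ 2 * (gmc A * (2 * (S.card : ℝ) - 1)) * l1norm (x - xstar) := by
  classical
  have hN2 : 2 ≤ N := by omega
  set μ := gmc A with hμdef
  have hμbar : ∀ i j : Fin N, i ≠ j → |∑ k, Wbar k i * A k j| ≤ μ := fun i j hij => by
    rw [hμdef, ← hWbar.2]; exact le_mutualMax A Wbar hij
  have hμhat : ∀ i j : Fin N, i ≠ j → |∑ k, What k i * A k j| ≤ μ := fun i j hij => by
    rw [hμdef, ← hWhat.2]; exact le_mutualMax A What hij
  have hμ0 : 0 ≤ μ := by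
    rw [hμdef, ← hWbar.2]; exact mutualMax_nonneg A Wbar hN2
  -- scalars
  set s : ℝ := (S.card : ℝ) with hsdef
  have hs2 : (2 : ℝ) ≤ s := by rw [hsdef]; exact_mod_cast hS2
  have hsN : 2 * s ≤ (N : ℝ) := by rw [hsdef]; exact_mod_cast hSN
  -- differences
  set d1 : Fin N → ℝ := fun j => xstar j - x j with hd1
  set d2 : Fin N → ℝ := fun j => xstar j - u j with hd2
  set D1 : ℝ := ∑ j, |d1 j| with hD1
  set D2 : ℝ := ∑ j, |d2 j| with hD2
  set U : ℝ := ∑ j, |u j| with hUdef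
  have hD1nn : 0 ≤ D1 := Finset.sum_nonneg fun _ _ => abs_nonneg _
  have hD2nn : 0 ≤ D2 := Finset.sum_nonneg fun _ _ => abs_nonneg _
  have hUnn : 0 ≤ U := Finset.sum_nonneg fun _ _ => abs_nonneg _
  have hL1 : l1norm (x - xstar) = D1 := by
    simp only [l1norm, hD1, hd1]
    exact Finset.sum_congr rfl fun j _ => by rw [Pi.sub_apply]; exact abs_sub_comm _ _
  have hL2 : l1norm (u - xstar) = D2 := by
    simp only [l1norm, hD2, hd2]
    exact Finset.sum_congr rfl fun j _ => by rw [Pi.sub_apply]; exact abs_sub_comm _ _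
  have hLU : l1norm u = U := rfl
  have hθ₁' : θ₁ = μ * D1 := by rw [hθ₁, hL1]
  have hθ₂' : θ₂ = μ * (D2 + (((N : ℝ) - s) / (s - 1)) * U) := by rw [hθ₂, hL2, hLU]
  have hθ₁nn : 0 ≤ θ₁ := by rw [hθ₁']; exact mul_nonneg hμ0 hD1nn
  have hextra : 0 ≤ (((N : ℝ) - s) / (s - 1)) * U := by
    apply mul_nonneg (div_nonneg (by linarith) (by linarith)) hUnn
  have hθ₂D2 : μ * D2 ≤ θ₂ := by
    rw [hθ₂']; exact mul_le_mul_of_nonneg_left (by linarith) hμ0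
  have hθ₂nn : 0 ≤ θ₂ := le_trans (mul_nonneg hμ0 hD2nn) hθ₂D2
  -- α facts
  have hα01 : 0 ≤ α ∧ α ≤ 1 ∧ (1 - α) * θ₂ ≤ θ₁ := by
    by_cases h0 : θ₁ = 0
    · have := hα.2 h0
      refine ⟨by linarith, by linarith, by rw [this, h0]; simp⟩
    · obtain ⟨h1, h2⟩ := hα.1 h0
      have hθ₁pos : 0 < θ₁ := lt_of_le_of_ne hθ₁nn (Ne.symm h0)
      have hden : 0 < θ₁ + θ₂ := by linarith
      have h3 : θ₂ ≤ α * (θ₁ + θ₂) := (div_le_iff₀ hden).1 h1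
      refine ⟨le_trans (div_nonneg hθ₂nn hden.le) h1, h2.le, ?_⟩
      nlinarith [h3, mul_nonneg (by linarith : (0:ℝ) ≤ 1 - α) hθ₁pos.le]
  obtain ⟨hα0, hα1, h1αθ⟩ := hα01
  -- supports sums
  have hSd1 : ∑ i ∈ S, |d1 i| = D1 := by
    rw [hD1]
    apply Finset.sum_subset (Finset.subset_univ S)
    intro i _ hi
    have hx0 : x i = 0 := by by_contra h; exact hi (hx i h)
    have hxs0 : xstar i = 0 := by by_contra h; exact hi (hsupp i h)
    simp [hd1, hx0, hxs0]
  -- measurement rewrites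
  have hbx : b - A.mulVec x = A.mulVec d1 := by
    rw [hb, hd1, ← Matrix.mulVec_sub]
    rfl
  have hbu : b - A.mulVec u = A.mulVec d2 := by
    rw [hb, hd2, ← Matrix.mulVec_sub]
    rfl
  -- errors
  set e1 : Fin N → ℝ :=
    fun i => ∑ j ∈ Finset.univ.erase i, (∑ k, Wbar k i * A k j) * d1 j with he1def
  set e2 : Fin N → ℝ :=
    fun i => ∑ j ∈ Finset.univ.erase i, (∑ k, What k i * A k j) * d2 j with he2def
  have he1 : ∀ i, |e1 i| ≤ μ * (D1 - |d1 i|) := by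
    intro i; simp only [he1def, hD1]; exact err_bound A Wbar μ hμbar d1 i
  have he2 : ∀ i, |e2 i| ≤ μ * (D2 - |d2 i|) := by
    intro i; simp only [he2def, hD2]; exact err_bound A What μ hμhat d2 i
  have he1' : ∀ i, |e1 i| ≤ θ₁ := fun i =>
    le_trans (he1 i) (by
      rw [hθ₁']
      exact mul_le_mul_of_nonneg_left (by linarith [abs_nonneg (d1 i)]) hμ0)
  have he2' : ∀ i, |e2 i| ≤ θ₂ := fun i =>
    le_trans (he2 i) (le_trans
      (mul_le_mul_of_nonneg_left (by linarith [abs_nonneg (d2 i)]) hμ0) hθ₂D2)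
  -- z decompositions
  have hz1 : ∀ i, (x + Wbar.transpose.mulVec (b - A.mulVec x)) i = xstar i + e1 i := by
    intro i
    rw [Pi.add_apply, hbx, mulVec_decomp A Wbar hWbar.1 d1 i]
    simp only [he1def, hd1]
    ring
  have hz2 : ∀ i, (u + What.transpose.mulVec (b - A.mulVec u)) i = xstar i + e2 i := by
    intro i
    rw [Pi.add_apply, hbu, mulVec_decomp A What hWhat.1 d2 i]
    simp only [he2def, hd2]
    ring
  -- off-support vanishing
  have hvS : ∀ i, i ∉ S → v i = 0 := by
    intro i hi
    have hxs0 : xstar i = 0 := by by_contra h; exact hi (hsupp i h)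
    rw [hv]
    show Real.sign _ * max (|(x + Wbar.transpose.mulVec (b - A.mulVec x)) i| - θ₁) 0 = 0
    apply soft_eq_zero'
    rw [hz1 i, hxs0, zero_add]
    exact he1' i
  have hwS : ∀ i, i ∉ S → w i = 0 := by
    intro i hi
    have hxs0 : xstar i = 0 := by by_contra h; exact hi (hsupp i h)
    rw [hw]
    show Real.sign _ * max (|(u + What.transpose.mulVec (b - A.mulVec u)) i| - θ₂) 0 = 0
    apply soft_eq_zero'
    rw [hz2 i, hxs0, zero_add]
    exact he2' i
  -- distance per coordinate
  have hvdist : ∀ i, |v i - xstar i| ≤ |e1 i| + θ₁ := by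
    intro i
    have h2 := hz1 i
    have hs : |v i - (x + Wbar.transpose.mulVec (b - A.mulVec x)) i| ≤ θ₁ := by
      rw [hv]; exact soft_sub_self hθ₁nn _
    calc |v i - xstar i|
        = |(v i - (x + Wbar.transpose.mulVec (b - A.mulVec x)) i) + e1 i| := by
          rw [h2]; ring_nf
      _ ≤ |v i - (x + Wbar.transpose.mulVec (b - A.mulVec x)) i| + |e1 i| := abs_add_le _ _
      _ ≤ |e1 i| + θ₁ := by linarith
  have hwdist : ∀ i, |w i - xstar i| ≤ |e2 i| + θ₂ := by
    intro i
    have h2 := hz2 i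
    have hs : |w i - (u + What.transpose.mulVec (b - A.mulVec u)) i| ≤ θ₂ := by
      rw [hw]; exact soft_sub_self hθ₂nn _
    calc |w i - xstar i|
        = |(w i - (u + What.transpose.mulVec (b - A.mulVec u)) i) + e2 i| := by
          rw [h2]; ring_nf
      _ ≤ |w i - (u + What.transpose.mulVec (b - A.mulVec u)) i| + |e2 i| := abs_add_le _ _
      _ ≤ |e2 i| + θ₂ := by linarith
  -- sum bounds
  have hv_sum : ∑ i ∈ S, |v i - xstar i| ≤ (2 * s - 1) * θ₁ := by
    calc ∑ i ∈ S, |v i - xstar i|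
        ≤ ∑ i ∈ S, (μ * (D1 - |d1 i|) + θ₁) :=
          Finset.sum_le_sum fun i _ => le_trans (hvdist i) (by linarith [he1 i])
      _ = μ * (s * D1 - ∑ i ∈ S, |d1 i|) + s * θ₁ := by
          rw [Finset.sum_add_distrib, ← Finset.mul_sum, Finset.sum_sub_distrib,
            Finset.sum_const, Finset.sum_const, nsmul_eq_mul, nsmul_eq_mul]
      _ = (2 * s - 1) * θ₁ := by rw [hSd1, hθ₁']; ring
  have hcompl : D2 - ∑ i ∈ S, |d2 i| = ∑ i ∈ Finset.univ \ S, |u i| := by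
    have h1 : ∑ i ∈ Finset.univ \ S, |d2 i| + ∑ i ∈ S, |d2 i| = D2 :=
      Finset.sum_sdiff (Finset.subset_univ S)
    have h2 : ∑ i ∈ Finset.univ \ S, |d2 i| = ∑ i ∈ Finset.univ \ S, |u i| := by
      apply Finset.sum_congr rfl
      intro i hi
      have hiS : i ∉ S := (Finset.mem_sdiff.1 hi).2
      have hxs0 : xstar i = 0 := by by_contra h; exact hiS (hsupp i h)
      simp [hd2, hxs0]
    linarith
  have hucU : ∑ i ∈ Finset.univ \ S, |u i| ≤ U := by
    rw [hUdef]
    exact Finset.sum_le_sum_of_subset_of_nonneg (Finset.sdiff_subset)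
      (fun i _ _ => abs_nonneg _)
  have hs1ne : s - 1 ≠ 0 := by intro h; linarith
  have hθ₂s : (s - 1) * θ₂ = μ * ((s - 1) * D2 + ((N : ℝ) - s) * U) := by
    have hc : ((N : ℝ) - s) / (s - 1) * (s - 1) = (N : ℝ) - s := div_mul_cancel₀ _ hs1ne
    calc (s - 1) * θ₂ = μ * ((s - 1) * D2 + (((N : ℝ) - s) / (s - 1) * (s - 1)) * U) := by
          rw [hθ₂']; ring
      _ = μ * ((s - 1) * D2 + ((N : ℝ) - s) * U) := by rw [hc]
  have hw_sum : ∑ i ∈ S, |w i - xstar i| ≤ (2 * s - 1) * θ₂ := by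
    have key : μ * (s * D2 - ∑ i ∈ S, |d2 i|) ≤ (s - 1) * θ₂ := by
      have h1 : s * D2 - ∑ i ∈ S, |d2 i| = (s - 1) * D2 + ∑ i ∈ Finset.univ \ S, |u i| := by
        linarith [hcompl]
      rw [h1, hθ₂s]
      have h2 : ∑ i ∈ Finset.univ \ S, |u i| ≤ ((N : ℝ) - s) * U := by
        nlinarith [hucU, hUnn, mul_nonneg (by linarith : (0:ℝ) ≤ (N:ℝ) - s - 1) hUnn]
      exact mul_le_mul_of_nonneg_left (by linarith) hμ0
    calc ∑ i ∈ S, |w i - xstar i|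
        ≤ ∑ i ∈ S, (μ * (D2 - |d2 i|) + θ₂) :=
          Finset.sum_le_sum fun i _ => le_trans (hwdist i) (by linarith [he2 i])
      _ = μ * (s * D2 - ∑ i ∈ S, |d2 i|) + s * θ₂ := by
          rw [Finset.sum_add_distrib, ← Finset.mul_sum, Finset.sum_sub_distrib,
            Finset.sum_const, Finset.sum_const, nsmul_eq_mul, nsmul_eq_mul]
      _ ≤ (s - 1) * θ₂ + s * θ₂ := by linarith [key]
      _ = (2 * s - 1) * θ₂ := by ring
  -- xp support
  have hxp_off : ∀ i, i ∉ S → xp i = 0 := by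
    intro i hi
    rw [hxp, Pi.add_apply, Pi.smul_apply, Pi.smul_apply, hvS i hi, hwS i hi]
    simp
  refine ⟨fun i h => by by_contra hi; exact h (hxp_off i hi), ?_, ?_⟩
  all_goals {
    have hxpsum : l1norm (xp - xstar) = ∑ i ∈ S, |xp i - xstar i| := by
      rw [l1norm]
      refine (Finset.sum_subset (Finset.subset_univ S) ?_).symm.trans
        (Finset.sum_congr rfl fun i _ => by rw [Pi.sub_apply])
      intro i _ hi
      have hxs0 : xstar i = 0 := by by_contra h; exact hi (hsupp i h)
      rw [Pi.sub_apply, hxp_off i hi, hxs0]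
      simp
    have hxpcoord : ∀ i, |xp i - xstar i| ≤ α * |v i - xstar i| + (1 - α) * |w i - xstar i| := by
      intro i
      have heq : xp i - xstar i = α * (v i - xstar i) + (1 - α) * (w i - xstar i) := by
        rw [hxp, Pi.add_apply, Pi.smul_apply, Pi.smul_apply, smul_eq_mul, smul_eq_mul]
        ring
      rw [heq]
      calc |α * (v i - xstar i) + (1 - α) * (w i - xstar i)|
          ≤ |α * (v i - xstar i)| + |(1 - α) * (w i - xstar i)| := abs_add_le _ _
        _ = α * |v i - xstar i| + (1 - α) * |w i - xstar i| := by
            rw [abs_mul, abs_mul, abs_of_nonneg hα0, abs_of_nonneg (by linarith : (0:ℝ) ≤ 1 - α)]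
    have hmain : l1norm (xp - xstar) ≤ α * ((2 * s - 1) * θ₁) + (1 - α) * ((2 * s - 1) * θ₂) := by
      rw [hxpsum]
      calc ∑ i ∈ S, |xp i - xstar i|
          ≤ ∑ i ∈ S, (α * |v i - xstar i| + (1 - α) * |w i - xstar i|) :=
            Finset.sum_le_sum fun i _ => hxpcoord i
        _ = α * ∑ i ∈ S, |v i - xstar i| + (1 - α) * ∑ i ∈ S, |w i - xstar i| := by
            rw [Finset.sum_add_distrib, Finset.mul_sum, Finset.mul_sum]
        _ ≤ α * ((2 * s - 1) * θ₁) + (1 - α) * ((2 * s - 1) * θ₂) :=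
            add_le_add (mul_le_mul_of_nonneg_left hv_sum hα0)
              (mul_le_mul_of_nonneg_left hw_sum (by linarith))
    have h2s1 : (0:ℝ) ≤ 2 * s - 1 := by linarith
    have hwpart : (1 - α) * ((2 * s - 1) * θ₂) ≤ (2 * s - 1) * θ₁ := by nlinarith [mul_le_mul_of_nonneg_left h1αθ h2s1]
    have hfin1 : l1norm (xp - xstar) ≤ (α + 1) * (μ * (2 * s - 1)) * l1norm (x - xstar) := by
      rw [hL1]
      have hrhs : (α + 1) * (μ * (2 * s - 1)) * D1 = α * ((2 * s - 1) * θ₁) + (2 * s - 1) * θ₁ := by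
        rw [hθ₁']; ring
      linarith [hmain, hwpart, hrhs.ge]
    first
      | exact hfin1
      | { have hC : 0 ≤ μ * (2 * s - 1) * l1norm (x - xstar) := by
            rw [hL1]; positivity
          nlinarith [hfin1, hC, mul_nonneg (by linarith : (0:ℝ) ≤ 1 - α) hC] }
  }
end
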